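/- In the Gaussian location model, suppose θ̂_n satisfies P_{n,0}(θ̂_n = 0) → 1 and l : ℝ → [0,∞) is nonnegative with l(s) ≥ l(0) for all s. Then for any fixed θ* with θ* = 0 as one of its (here the only) coordinates, and any sequence ρ_n with √n ρ_n → ∞, the supremum of E_{n,θ}[l(√n(θ̂_n − θ))] over {|θ − θ*| < ρ_n} tends to sup_{s∈ℝ} l(s). -/

import Mathlib

/-! Fix `s` with `l s` close to `⨆ l`. The local alternatives `θₙ = -s/√n` eventually lie in the
neighbourhood because `√n ρₙ → ∞`, and on the event `θ̂ₙ = 0` the loss at `θₙ` is exactly `l s`.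
That event has `P_{n,0}`-probability tending to one, hence also `P_{n,θₙ}`-probability tending to
one: the likelihood ratio of `P_{n,θₙ}` against `P_{n,0}` has second moment `exp (n θₙ²) ≤ exp s²`,
so by Cauchy–Schwarz `P_{n,θₙ}(A) ≤ exp (s²/2) · P_{n,0}(A)^{1/2}`. -/

open MeasureTheory ProbabilityTheory Filter Topology

/-- Joint law of a sample of size `n` of i.i.d. `N(θ,1)` observations. -/
noncomputable def gaussP (n : ℕ) (θ : ℝ) : Measure (Fin n → ℝ) :=
  Measure.pi fun _ => gaussianReal θ 1

open scoped ENNReal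

section Product

variable {ι : Type*} [Fintype ι] {α : ι → Type*} [∀ i, MeasurableSpace (α i)]
  (μ : ∀ i, Measure (α i)) [∀ i, IsProbabilityMeasure (μ i)]

theorem lintegral_pi_prod_eq_prod (f : ∀ i, α i → ℝ≥0∞) (hf : ∀ i, Measurable (f i)) :
    ∫⁻ y, ∏ i, f i (y i) ∂Measure.pi μ = ∏ i, ∫⁻ x, f i x ∂μ i := by
  rw [lintegral_prod_eq_prod_lintegral_of_indepFun _ _
    (iIndepFun_pi fun i => (hf i).aemeasurable) fun i => (hf i).comp (measurable_pi_apply i)]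
  exact Finset.prod_congr rfl fun i _ =>
    (measurePreserving_eval μ i).lintegral_comp (hf i)

theorem pi_withDensity (f : ∀ i, α i → ℝ≥0∞) (hf : ∀ i, Measurable (f i))
    [∀ i, SigmaFinite ((μ i).withDensity (f i))] :
    Measure.pi (fun i => (μ i).withDensity (f i))
      = (Measure.pi μ).withDensity (fun y => ∏ i, f i (y i)) := by
  refine Measure.pi_eq fun s hs => ?_
  rw [withDensity_apply _ (.univ_pi hs), ← lintegral_indicator (.univ_pi hs)]
  have hind : (Set.univ.pi s).indicator (fun y => ∏ i, f i (y i))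
      = fun y => ∏ i, (s i).indicator (f i) (y i) := by
    classical
    ext y
    simp only [Set.indicator_apply, Set.mem_univ_pi, Fintype.prod_ite_zero]
  rw [hind, lintegral_pi_prod_eq_prod μ _ fun i => (hf i).indicator (hs i)]
  exact Finset.prod_congr rfl fun i _ => by
    rw [lintegral_indicator (hs i), withDensity_apply _ (hs i)]

end Product

theorem setLIntegral_le_sqrt_lintegral_sq_mul_sqrt_measure {α : Type*} [MeasurableSpace α]
    {μ : Measure α} {f : α → ℝ≥0∞} (hf : Measurable f) {B : Set α} (hB : MeasurableSet B) :
    ∫⁻ x in B, f x ∂μ ≤ (∫⁻ x, f x ^ 2 ∂μ) ^ (1 / 2 : ℝ) * μ B ^ (1 / 2 : ℝ) := by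
  have hcs := ENNReal.lintegral_mul_le_Lp_mul_Lq μ Real.HolderConjugate.two_two hf.aemeasurable
    (aemeasurable_one.indicator hB)
  have hpow : ∀ x, B.indicator (fun _ => (1 : ℝ≥0∞)) x ^ (2 : ℝ) = B.indicator 1 x := fun x => by
    by_cases hx : x ∈ B <;> simp [hx]
  rw [lintegral_congr hpow, lintegral_indicator_one hB] at hcs
  simpa only [ENNReal.rpow_ofNat, Pi.mul_apply, ← Set.indicator_mul_right, mul_one,
    lintegral_indicator hB] using hcs

section Contiguity

variable {ι : Type*} {l : Filter ι} {X : ι → Type*} [∀ i, MeasurableSpace (X i)]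

theorem tendsto_measure_compl_nhds_zero_iff (μ : ∀ i, Measure (X i))
    [∀ i, IsProbabilityMeasure (μ i)] {A : ∀ i, Set (X i)} (hA : ∀ i, MeasurableSet (A i)) :
    Tendsto (fun i => μ i (A i)ᶜ) l (𝓝 0) ↔ Tendsto (fun i => μ i (A i)) l (𝓝 1) := by
  simp_rw [prob_compl_eq_one_sub (hA _)]
  constructor
  · intro h
    simpa [ENNReal.sub_sub_cancel ENNReal.one_ne_top prob_le_one] using
      ENNReal.Tendsto.sub tendsto_const_nhds h (Or.inl ENNReal.one_ne_top)
  · intro h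
    simpa using ENNReal.Tendsto.sub tendsto_const_nhds h (Or.inl ENNReal.one_ne_top)

theorem tendsto_withDensity_apply_nhds_zero (μ : ∀ i, Measure (X i)) {f : ∀ i, X i → ℝ≥0∞}
    (hf : ∀ i, Measurable (f i)) {C : ℝ≥0∞} (hC : C ≠ ∞)
    (hsq : ∀ i, ∫⁻ x, f i x ^ 2 ∂μ i ≤ C) {A : ∀ i, Set (X i)} (hA : ∀ i, MeasurableSet (A i))
    (h : Tendsto (fun i => μ i (A i)) l (𝓝 0)) :
    Tendsto (fun i => (μ i).withDensity (f i) (A i)) l (𝓝 0) := by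
  have hbound : Tendsto (fun i => C ^ (1 / 2 : ℝ) * μ i (A i) ^ (1 / 2 : ℝ)) l (𝓝 0) := by
    simpa [ENNReal.zero_rpow_of_pos] using ENNReal.Tendsto.const_mul
      (((ENNReal.continuous_rpow_const (y := 1 / 2)).tendsto 0).comp h)
      (Or.inr (ENNReal.rpow_ne_top_of_nonneg (by norm_num : (0 : ℝ) ≤ 1 / 2) hC))
  refine tendsto_of_tendsto_of_tendsto_of_le_of_le tendsto_const_nhds hbound
    (fun _ => bot_le) fun i => ?_
  rw [withDensity_apply _ (hA i)]
  exact (setLIntegral_le_sqrt_lintegral_sq_mul_sqrt_measure (hf i) (hA i)).trans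
    (by gcongr; exact hsq i)

end Contiguity

noncomputable def gaussianLikelihoodRatio (θ x : ℝ) : ℝ≥0∞ :=
  ENNReal.ofReal (Real.exp (θ * x - θ ^ 2 / 2))

@[fun_prop]
theorem measurable_gaussianLikelihoodRatio (θ : ℝ) : Measurable (gaussianLikelihoodRatio θ) := by
  unfold gaussianLikelihoodRatio
  fun_prop

theorem gaussianReal_eq_withDensity_gaussianLikelihoodRatio (θ : ℝ) :
    gaussianReal θ 1 = (gaussianReal 0 1).withDensity (gaussianLikelihoodRatio θ) := by
  rw [gaussianReal_of_var_ne_zero _ one_ne_zero, gaussianReal_of_var_ne_zero _ one_ne_zero,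
    ← withDensity_mul _ (measurable_gaussianPDF 0 1) (measurable_gaussianLikelihoodRatio θ)]
  congr 1
  ext x
  rw [Pi.mul_apply, gaussianPDF_def, gaussianPDF_def, gaussianLikelihoodRatio,
    ← ENNReal.ofReal_mul (gaussianPDFReal_nonneg _ _ _)]
  simp only [gaussianPDFReal, mul_assoc, ← Real.exp_add]
  congr 3
  push_cast
  ring

theorem lintegral_gaussianLikelihoodRatio_sq (θ : ℝ) :
    ∫⁻ x, gaussianLikelihoodRatio θ x ^ 2 ∂gaussianReal 0 1
      = ENNReal.ofReal (Real.exp (θ ^ 2)) := by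
  have htilt : ∀ x, gaussianLikelihoodRatio θ x ^ 2
      = ENNReal.ofReal (Real.exp (θ ^ 2)) * gaussianLikelihoodRatio (2 * θ) x := fun x => by
    simp only [gaussianLikelihoodRatio, ← ENNReal.ofReal_pow (Real.exp_nonneg _),
      ← ENNReal.ofReal_mul (Real.exp_nonneg _), ← Real.exp_nat_mul, ← Real.exp_add]
    congr 2
    push_cast
    ring
  have hmass : ∫⁻ x, gaussianLikelihoodRatio (2 * θ) x ∂gaussianReal 0 1 = 1 := by
    rw [← setLIntegral_univ, ← withDensity_apply _ MeasurableSet.univ,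
      ← gaussianReal_eq_withDensity_gaussianLikelihoodRatio, measure_univ]
  rw [lintegral_congr htilt, lintegral_const_mul _ (measurable_gaussianLikelihoodRatio _), hmass,
    mul_one]

instance isProbabilityMeasure_gaussP (n : ℕ) (θ : ℝ) : IsProbabilityMeasure (gaussP n θ) := by
  unfold gaussP
  infer_instance

theorem gaussP_eq_withDensity (n : ℕ) (θ : ℝ) :
    gaussP n θ = (gaussP n 0).withDensity fun y => ∏ i, gaussianLikelihoodRatio θ (y i) := by
  have : SigmaFinite ((gaussianReal 0 1).withDensity (gaussianLikelihoodRatio θ)) := by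
    rw [← gaussianReal_eq_withDensity_gaussianLikelihoodRatio]
    infer_instance
  rw [gaussP, gaussP, ← pi_withDensity _ _ fun _ => measurable_gaussianLikelihoodRatio θ,
    ← gaussianReal_eq_withDensity_gaussianLikelihoodRatio]

theorem lintegral_prod_gaussianLikelihoodRatio_sq (n : ℕ) (θ : ℝ) :
    ∫⁻ y, (∏ i, gaussianLikelihoodRatio θ (y i)) ^ 2 ∂gaussP n 0
      = ENNReal.ofReal (Real.exp (θ ^ 2)) ^ n := by
  simp_rw [← Finset.prod_pow]
  rw [gaussP, lintegral_pi_prod_eq_prod _ _ fun _ =>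
    (measurable_gaussianLikelihoodRatio θ).pow_const 2]
  simp [lintegral_gaussianLikelihoodRatio_sq]

theorem tendsto_gaussP_localAlternative_nhds_one (s : ℝ) {A : ∀ n, Set (Fin n → ℝ)}
    (hA : ∀ n, MeasurableSet (A n)) (h : Tendsto (fun n => gaussP n 0 (A n)) atTop (𝓝 1)) :
    Tendsto (fun n : ℕ => gaussP n (s / Real.sqrt n) (A n)) atTop (𝓝 1) := by
  have hsq (n : ℕ) : ∫⁻ y, (∏ i, gaussianLikelihoodRatio (s / Real.sqrt n) (y i)) ^ 2 ∂gaussP n 0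
      ≤ ENNReal.ofReal (Real.exp (s ^ 2)) := by
    rw [lintegral_prod_gaussianLikelihoodRatio_sq, ← ENNReal.ofReal_pow (Real.exp_nonneg _),
      ← Real.exp_nat_mul, div_pow, Real.sq_sqrt n.cast_nonneg]
    gcongr
    rcases n.eq_zero_or_pos with rfl | hn
    · simp [sq_nonneg]
    · rw [mul_div_cancel₀ _ (by positivity)]
  rw [← tendsto_measure_compl_nhds_zero_iff _ hA] at h ⊢
  refine (tendsto_withDensity_apply_nhds_zero (gaussP · 0) (fun _ => by fun_prop)
    ENNReal.ofReal_ne_top hsq (fun n => (hA n).compl) h).congr fun n => ?_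
  rw [← gaussP_eq_withDensity]

theorem stmt_16_general
    (est : (n : ℕ) → (Fin n → ℝ) → ℝ)
    (hmeas : ∀ n, Measurable (est n))
    (hsparse : Tendsto (fun n => gaussP n 0 {y | est n y = 0}) atTop (𝓝 1))
    (l : ℝ → ℝ)
    (ρ : ℕ → ℝ)
    (hρ : Tendsto (fun n : ℕ => Real.sqrt n * ρ n) atTop atTop)
    (θstar : ℝ) (hθstar : θstar = 0) :
    Tendsto (fun n : ℕ => ⨆ θ : ℝ, ⨆ _ : |θ - θstar| < ρ n,
        ∫⁻ y, ENNReal.ofReal (l (Real.sqrt n * (est n y - θ))) ∂(gaussP n θ))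
      atTop (𝓝 (⨆ s : ℝ, ENNReal.ofReal (l s))) := by
  subst hθstar
  refine tendsto_order.2 ⟨fun a ha => ?_, fun b hb => .of_forall fun n => (iSup₂_le fun θ _ =>
    lintegral_le_const (.of_forall fun y => le_iSup (fun s => ENNReal.ofReal (l s)) _)).trans_lt hb⟩
  obtain ⟨s, hs⟩ := lt_iSup_iff.1 ha
  have hB : ∀ n, MeasurableSet {y | est n y = 0} := fun n => hmeas n (measurableSet_singleton 0)
  have hlim : Tendsto (fun n : ℕ => ENNReal.ofReal (l s) * gaussP n (-s / Real.sqrt n)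
      {y | est n y = 0}) atTop (𝓝 (ENNReal.ofReal (l s))) := by
    simpa using ENNReal.Tendsto.const_mul
      (tendsto_gaussP_localAlternative_nhds_one (-s) hB hsparse) (Or.inr ENNReal.ofReal_ne_top)
  filter_upwards [hlim.eventually_const_lt hs, hρ.eventually_gt_atTop |s|,
    eventually_ne_atTop 0] with n hlt hρn hn
  have hsqrt : 0 < Real.sqrt n := Real.sqrt_pos.2 (by positivity)
  have hmem : |-s / Real.sqrt n - 0| < ρ n := by
    rwa [sub_zero, abs_div, abs_neg, abs_of_pos hsqrt, div_lt_iff₀' hsqrt]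
  refine hlt.trans_le (le_iSup₂_of_le (-s / Real.sqrt n) hmem ?_)
  rw [← lintegral_indicator_const (hB n)]
  refine lintegral_mono (Set.indicator_le fun y (hy : est n y = 0) => ?_)
  rw [hy, zero_sub, neg_div, neg_neg, mul_div_cancel₀ _ hsqrt.ne']

theorem stmt_16
    (est : (n : ℕ) → (Fin n → ℝ) → ℝ)
    (hmeas : ∀ n, Measurable (est n))
    (hsparse : Tendsto (fun n => gaussP n 0 {y | est n y = 0}) atTop (𝓝 1))
    (l : ℝ → ℝ) (hl : ∀ s, 0 ≤ l s) (hl0 : ∀ s, l 0 ≤ l s) (hlmeas : Measurable l)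
    (ρ : ℕ → ℝ) (hρpos : ∀ n, 0 < ρ n)
    (hρ : Tendsto (fun n : ℕ => Real.sqrt n * ρ n) atTop atTop)
    (θstar : ℝ) (hθstar : θstar = 0) :
    Tendsto (fun n : ℕ => ⨆ θ : ℝ, ⨆ _ : |θ - θstar| < ρ n,
        ∫⁻ y, ENNReal.ofReal (l (Real.sqrt n * (est n y - θ))) ∂(gaussP n θ))
      atTop (𝓝 (⨆ s : ℝ, ENNReal.ofReal (l s))) :=
  stmt_16_general est hmeas hsparse l ρ hρ θstar hθstar
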